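/- Fix N ≥ 1 and let λ ∈ SGN(N) be a signature, with λ⁺, λ⁻ the associated pair of Young diagrams and X(λ) the associated particles/holes configuration. Then the number of particles equals the number of holes: |X(λ) ∩ 𝔛^{(N)}_out| = |X(λ) ∩ 𝔛^{(N)}_in| = d(λ⁺) + d(λ⁻). In particular d(λ⁺) + d(λ⁻) ≤ N and |X(λ)| = 2(d(λ⁺) + d(λ⁻)) ≤ 2N; moreover X(λ) = ∅ if and only if λ is the zero signature (λ_1 = … = λ_N = 0). -/

import Mathlib

/-!
The points `λ_i - i + (N+1)/2` of `L(λ)` are strictly decreasing, so `L(λ)` and `𝔛_in`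
both have `N` points and `|L(λ) ∖ 𝔛_in| = |𝔛_in ∖ L(λ)|`: particles and holes are
equinumerous. The point of row `i` lies to the right of `𝔛_in` iff `λ_i ≥ i`, i.e. iff
`(i, i)` is a box of `λ⁺`, and to the left iff `λ_i ≤ i - N - 1`, i.e. iff
`(N + 1 - i, N + 1 - i)` is a box of `λ⁻`; hence there are `d(λ⁺) + d(λ⁻)` particles.
-/

/-- A signature of length `N`: a nonincreasing `N`-tuple of integers. -/
def Signature (N : ℕ) : Type := {l : Fin N → ℤ // Antitone l}

/-- The number of diagonal boxes `d(μ)` of a Young diagram `μ`. -/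
def diagLen (μ : YoungDiagram) : ℕ := (μ.cells.filter fun c => c.1 = c.2).card

/-- The Young diagram `λ⁺` whose `i`-th row is `max(λ_i, 0)`. -/
def sigPosYD {N : ℕ} (l : Signature N) : YoungDiagram :=
  YoungDiagram.ofRowLens (List.ofFn fun i => (l.1 i).toNat)
    (List.sortedGE_ofFn_iff.mpr fun _ _ h => Int.toNat_le_toNat (l.2 h))

/-- The Young diagram `λ⁻` whose `j`-th row is `max(-λ_{N+1-j}, 0)`. -/
def sigNegYD {N : ℕ} (l : Signature N) : YoungDiagram :=
  YoungDiagram.ofRowLens (List.ofFn fun i => (-(l.1 i.rev)).toNat)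
    (List.sortedGE_ofFn_iff.mpr fun _ _ h =>
      Int.toNat_le_toNat (neg_le_neg (l.2 (Fin.rev_le_rev.mpr h))))

/-- The inner part `𝔛^{(N)}_in = 𝔛^{(N)} ∩ (-N/2, N/2) = {-(N-1)/2, …, (N-1)/2}`
(exactly `N` points); the particles of `X(λ)` lying in `𝔛^{(N)}_out` are exactly those
of `X(λ) ∖ 𝔛^{(N)}_in`. -/
def innerFin (N : ℕ) : Finset ℚ :=
  Finset.univ.image fun k : Fin N => (k : ℚ) - (N - 1) / 2

/-- The `N`-point configuration `L(λ) = {λ_i - i + (N+1)/2 : 1 ≤ i ≤ N} ⊂ 𝔛^{(N)}`. -/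
def config (N : ℕ) (l : Signature N) : Finset ℚ :=
  Finset.univ.image fun i : Fin N => (l.1 i : ℚ) - ((i : ℕ) + 1) + (N + 1) / 2

/-- The particles/holes configuration
`X(λ) = (L(λ) ∖ 𝔛^{(N)}_in) ∪ (𝔛^{(N)}_in ∖ L(λ))`. -/
def Xconf (N : ℕ) (l : Signature N) : Finset ℚ :=
  (config N l \ innerFin N) ∪ (innerFin N \ config N l)

open Finset
open scoped symmDiff

theorem diagLen_ofRowLens_ofFn {n : ℕ} (v : Fin n → ℕ) (hv : (List.ofFn v).SortedGE) :
    diagLen (YoungDiagram.ofRowLens (List.ofFn v) hv) = #{i : Fin n | (i : ℕ) < v i} := by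
  have hdiag : (YoungDiagram.ofRowLens (List.ofFn v) hv).cells.filter (fun c => c.1 = c.2) =
      ({i : Fin n | (i : ℕ) < v i} : Finset (Fin n)).image
        fun i : Fin n => ((i : ℕ), (i : ℕ)) := by
    ext ⟨a, b⟩
    simp only [mem_filter, YoungDiagram.mem_cells, YoungDiagram.mem_ofRowLens, List.length_ofFn,
      List.getElem_ofFn, mem_image, mem_univ, true_and, Prod.mk.injEq]
    constructor
    · rintro ⟨⟨ha, hb⟩, rfl⟩
      exact ⟨⟨a, ha⟩, hb, rfl, rfl⟩
    · rintro ⟨i, hi, rfl, rfl⟩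
      exact ⟨⟨i.2, hi⟩, rfl⟩
  rw [diagLen, hdiag, card_image_of_injective]
  intro i j h
  exact Fin.val_injective (Prod.ext_iff.mp h).1

theorem Finset.symmDiff_inter_right {α : Type*} [DecidableEq α] (s t : Finset α) :
    s ∆ t ∩ t = t \ s := by
  ext x
  simp only [mem_inter, mem_symmDiff, mem_sdiff]
  tauto

theorem intCast_sub_mem_innerFin_iff {N : ℕ} (m : ℤ) :
    (m : ℚ) - (N - 1) / 2 ∈ innerFin N ↔ 0 ≤ m ∧ m < N := by
  simp only [innerFin, mem_image, mem_univ, true_and, sub_left_inj]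
  constructor
  · rintro ⟨k, hk⟩
    have : (k : ℤ) = m := by exact_mod_cast hk
    omega
  · rintro ⟨h0, hN⟩
    refine ⟨⟨m.toNat, by omega⟩, ?_⟩
    exact_mod_cast Int.toNat_of_nonneg h0

theorem card_innerFin (N : ℕ) : #(innerFin N) = N := by
  rw [innerFin, card_image_of_injective _ fun i j h => Fin.ext (by simpa using h), card_univ,
    Fintype.card_fin]

namespace Signature

variable {N : ℕ} (l : Signature N)

def point (i : Fin N) : ℚ := (l.1 i : ℚ) - ((i : ℕ) + 1) + (N + 1) / 2

theorem config_eq_image_point : config N l = univ.image l.point := rfl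

theorem point_strictAnti : StrictAnti l.point := by
  intro i j hij
  have hl : (l.1 j : ℚ) ≤ l.1 i := by exact_mod_cast l.2 hij.le
  have hij' : (i : ℚ) < j := by exact_mod_cast hij
  simp only [point]
  linarith

theorem card_config : #(config N l) = N := by
  rw [config_eq_image_point, card_image_of_injective _ l.point_strictAnti.injective, card_univ,
    Fintype.card_fin]

-- Rows are 0-based here: `i ∈ l.rightOut` is the condition `λ_{i+1} ≥ i + 1` of the paper.
def rightOut : Finset (Fin N) := {i | (i : ℤ) < l.1 i}

def leftOut : Finset (Fin N) := {i | l.1 i ≤ (i : ℤ) - N}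

theorem disjoint_rightOut_leftOut : Disjoint l.rightOut l.leftOut := by
  rw [disjoint_left]
  intro i hr hl
  simp only [rightOut, leftOut, mem_filter, mem_univ, true_and] at hr hl
  omega

theorem point_notMem_innerFin_iff (i : Fin N) :
    l.point i ∉ innerFin N ↔ i ∈ l.rightOut ∪ l.leftOut := by
  have : l.point i = ((l.1 i - i + N - 1 : ℤ) : ℚ) - (N - 1) / 2 := by
    simp only [point]; push_cast; ring
  rw [this, intCast_sub_mem_innerFin_iff]
  simp only [rightOut, leftOut, mem_union, mem_filter, mem_univ, true_and]
  omega

theorem config_sdiff_innerFin :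
    config N l \ innerFin N = (l.rightOut ∪ l.leftOut).image l.point := by
  rw [sdiff_eq_filter, config_eq_image_point, filter_image]
  congr 1
  ext i
  simp [point_notMem_innerFin_iff]

theorem diagLen_sigPosYD : diagLen (sigPosYD l) = #l.rightOut := by
  rw [sigPosYD, diagLen_ofRowLens_ofFn, rightOut]
  congr 1
  ext i
  simp only [mem_filter, mem_univ, true_and]
  omega

theorem diagLen_sigNegYD : diagLen (sigNegYD l) = #l.leftOut := by
  rw [sigNegYD, diagLen_ofRowLens_ofFn, leftOut]
  refine card_nbij' Fin.rev Fin.rev ?_ ?_ (fun i _ => Fin.rev_rev i) (fun i _ => Fin.rev_rev i)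
  · intro i hi
    simp only [coe_filter, mem_univ, true_and, Set.mem_ofPred_eq, Fin.val_rev] at hi ⊢
    omega
  · intro i hi
    simp only [coe_filter, mem_univ, true_and, Set.mem_ofPred_eq, Fin.val_rev, Fin.rev_rev]
      at hi ⊢
    omega

theorem card_config_sdiff_innerFin :
    #(config N l \ innerFin N) = diagLen (sigPosYD l) + diagLen (sigNegYD l) := by
  rw [config_sdiff_innerFin, card_image_of_injective _ l.point_strictAnti.injective,
    card_union_of_disjoint l.disjoint_rightOut_leftOut, diagLen_sigPosYD, diagLen_sigNegYD]

theorem rightOut_eq_empty_iff : l.rightOut = ∅ ↔ ∀ i, l.1 i ≤ 0 := by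
  simp only [rightOut, filter_eq_empty_iff, mem_univ, true_implies, not_lt]
  refine ⟨fun h i => ?_, fun h i => (h i).trans (by omega)⟩
  have hfirst : l.1 ⟨0, i.pos⟩ ≤ 0 := @h ⟨0, i.pos⟩
  exact (l.2 (show (⟨0, i.pos⟩ : Fin N) ≤ i from Nat.zero_le _)).trans hfirst

theorem leftOut_eq_empty_iff : l.leftOut = ∅ ↔ ∀ i, 0 ≤ l.1 i := by
  simp only [leftOut, filter_eq_empty_iff, mem_univ, true_implies, not_le]
  refine ⟨fun h i => ?_, fun h i => lt_of_lt_of_le (by omega) (h i)⟩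
  have hi := i.2
  have hlast : 0 ≤ l.1 ⟨N - 1, by omega⟩ := by
    have := @h ⟨N - 1, by omega⟩
    simp only at this
    omega
  exact hlast.trans (l.2 (show i ≤ ⟨N - 1, by omega⟩ from Nat.le_sub_one_of_lt hi))

theorem diagLen_sigPosYD_add_diagLen_sigNegYD_eq_zero_iff :
    diagLen (sigPosYD l) + diagLen (sigNegYD l) = 0 ↔ ∀ i, l.1 i = 0 := by
  rw [Nat.add_eq_zero_iff, diagLen_sigPosYD, diagLen_sigNegYD, card_eq_zero, card_eq_zero,
    rightOut_eq_empty_iff, leftOut_eq_empty_iff, ← forall_and]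
  exact forall_congr' fun i => le_antisymm_iff.symm

end Signature

theorem Xconf_eq_symmDiff (N : ℕ) (l : Signature N) : Xconf N l = config N l ∆ innerFin N := rfl

theorem particles_holes_count_general (N : ℕ) (l : Signature N) :
    (Xconf N l \ innerFin N).card = diagLen (sigPosYD l) + diagLen (sigNegYD l) ∧
    (Xconf N l ∩ innerFin N).card = diagLen (sigPosYD l) + diagLen (sigNegYD l) ∧
    diagLen (sigPosYD l) + diagLen (sigNegYD l) ≤ N ∧
    (Xconf N l).card = 2 * (diagLen (sigPosYD l) + diagLen (sigNegYD l)) ∧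
    (Xconf N l).card ≤ 2 * N ∧
    (Xconf N l = ∅ ↔ ∀ i, l.1 i = 0) := by
  have hout := l.card_config_sdiff_innerFin
  have hin : #(innerFin N \ config N l) = #(config N l \ innerFin N) :=
    card_sdiff_comm (by rw [card_innerFin, l.card_config])
  have hle : #(config N l \ innerFin N) ≤ N := (card_le_card sdiff_subset).trans l.card_config.le
  have hX : #(Xconf N l) = #(config N l \ innerFin N) + #(innerFin N \ config N l) :=
    card_union_of_disjoint disjoint_sdiff_sdiff
  refine ⟨by rw [Xconf_eq_symmDiff, symmDiff_sdiff_right, hout],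
    by rw [Xconf_eq_symmDiff, symmDiff_inter_right, hin, hout],
    hout ▸ hle, by omega, by omega, ?_⟩
  rw [← card_eq_zero, hX, hin, hout, ← l.diagLen_sigPosYD_add_diagLen_sigNegYD_eq_zero_iff]
  exact add_self_eq_zero

/-- For `λ ∈ SGN(N)`: the number of particles equals the number of holes,
`|X(λ) ∩ 𝔛^{(N)}_out| = |X(λ) ∩ 𝔛^{(N)}_in| = d(λ⁺) + d(λ⁻)`; in particular
`d(λ⁺) + d(λ⁻) ≤ N` and `|X(λ)| = 2(d(λ⁺) + d(λ⁻)) ≤ 2N`; moreover `X(λ) = ∅` iff `λ`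
is the zero signature. -/
theorem particles_holes_count (N : ℕ) (hN : 1 ≤ N) (l : Signature N) :
    (Xconf N l \ innerFin N).card = diagLen (sigPosYD l) + diagLen (sigNegYD l) ∧
    (Xconf N l ∩ innerFin N).card = diagLen (sigPosYD l) + diagLen (sigNegYD l) ∧
    diagLen (sigPosYD l) + diagLen (sigNegYD l) ≤ N ∧
    (Xconf N l).card = 2 * (diagLen (sigPosYD l) + diagLen (sigNegYD l)) ∧
    (Xconf N l).card ≤ 2 * N ∧
    (Xconf N l = ∅ ↔ ∀ i, l.1 i = 0) :=
  particles_holes_count_general N l
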